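/- Let L be an even lattice of level N and let ℓ ∈ L be a primitive isotropic vector such that (ℓ, L) = NZ. Choose ℓ' ∈ L' with (ℓ', ℓ) = 1 and set ℓ̃ = N(ℓ' - Q(ℓ')ℓ). Then ℓ̃ is an isotropic vector of L with (ℓ̃, ℓ) = N, and L splits as an orthogonal direct sum L = K ⊕ (Zℓ̃ + Zℓ) where K = L ∩ ℓ^⊥ ∩ ℓ̃^⊥; in particular the sublattice Zℓ̃ + Zℓ is isometric to U(N), the hyperbolic plane rescaled by N. -/

import Mathlib

/-!
Since `(ℓ', ℓ) = 1` and `ℓ` is isotropic, `ℓ' - Q(ℓ')ℓ` is isotropic and still pairs to `1`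
with `ℓ`; scaling by `N` makes it a lattice vector, because `Nℓ' ∈ L` and `NQ(ℓ') ∈ ℤ`.
For `x ∈ L` both `(x, ℓ)` and `(x, ℓ̃)` are multiples of `N`: the first by hypothesis, the second
because `(x, ℓ̃) = N((x, ℓ') - Q(ℓ')(x, ℓ))`. Hence `x - ((x,ℓ)/N) ℓ̃ - ((x,ℓ̃)/N) ℓ` is the unique
integral correction of `x` orthogonal to the hyperbolic pair `ℓ, ℓ̃`.
-/

namespace HyperbolicSplitting

variable {V : Type*} [AddCommGroup V] [Module ℚ V] (B : V →ₗ[ℚ] V →ₗ[ℚ] ℚ)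

section HyperbolicPair

variable {e f : V} {c : ℚ}

lemma apply_sub_zsmul_add_zsmul_left (hee : B e e = 0) (hfe : B f e = c) (x : V) (a b : ℤ) :
    B (x - (a • f + b • e)) e = B x e - a * c := by
  simp only [map_sub, map_add, map_zsmul, LinearMap.sub_apply, LinearMap.add_apply,
    LinearMap.smul_apply, zsmul_eq_mul, hee, hfe]
  ring

lemma apply_sub_zsmul_add_zsmul_right (hff : B f f = 0) (hef : B e f = c) (x : V) (a b : ℤ) :
    B (x - (a • f + b • e)) f = B x f - b * c := by
  simp only [map_sub, map_add, map_zsmul, LinearMap.sub_apply, LinearMap.add_apply,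
    LinearMap.smul_apply, zsmul_eq_mul, hff, hef]
  ring

theorem existsUnique_orthogonal_decomposition {L : Submodule ℤ V} (hc : c ≠ 0)
    (he : e ∈ L) (hf : f ∈ L) (hee : B e e = 0) (hff : B f f = 0)
    (hef : B e f = c) (hfe : B f e = c)
    (hdvd_e : ∀ x ∈ L, ∃ n : ℤ, B x e = c * n) (hdvd_f : ∀ x ∈ L, ∃ n : ℤ, B x f = c * n)
    {x : V} (hx : x ∈ L) :
    ∃! ab : ℤ × ℤ,
      x - (ab.1 • f + ab.2 • e) ∈ L ∧
      B (x - (ab.1 • f + ab.2 • e)) e = 0 ∧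
      B (x - (ab.1 • f + ab.2 • e)) f = 0 := by
  obtain ⟨a, ha⟩ := hdvd_e x hx
  obtain ⟨b, hb⟩ := hdvd_f x hx
  refine ⟨(a, b), ⟨?_, ?_, ?_⟩, ?_⟩
  · exact L.sub_mem hx (L.add_mem (L.smul_mem _ hf) (L.smul_mem _ he))
  · rw [apply_sub_zsmul_add_zsmul_left B hee hfe, ha]; ring
  · rw [apply_sub_zsmul_add_zsmul_right B hff hef, hb]; ring
  · rintro ⟨a', b'⟩ ⟨-, h_e, h_f⟩
    rw [apply_sub_zsmul_add_zsmul_left B hee hfe, ha, sub_eq_zero, mul_comm] at h_e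
    rw [apply_sub_zsmul_add_zsmul_right B hff hef, hb, sub_eq_zero, mul_comm] at h_f
    have ha' : a' = a := by exact_mod_cast (mul_right_cancel₀ hc h_e).symm
    have hb' : b' = b := by exact_mod_cast (mul_right_cancel₀ hc h_f).symm
    rw [ha', hb']

end HyperbolicPair

section IsotropicPartner

variable {l l' : V}

lemma smul_sub_smul_apply_right (hll : B l l = 0) (hl'l : B l' l = 1) (t s : ℚ) :
    B (t • l' - s • l) l = t := by
  simp [hll, hl'l]

lemma apply_smul_sub_smul (x : V) (t s : ℚ) :
    B x (t • l' - s • l) = t * B x l' - s * B x l := by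
  simp

lemma isotropic_smul_sub_smul (hll : B l l = 0) (hl'l : B l' l = 1) (hll' : B l l' = 1)
    (t : ℚ) :
    B (t • l' - (t * (B l' l' / 2)) • l) (t • l' - (t * (B l' l' / 2)) • l) = 0 := by
  simp only [map_sub, map_smul, LinearMap.sub_apply, LinearMap.smul_apply, smul_eq_mul,
    hll, hl'l, hll']
  ring

end IsotropicPartner

end HyperbolicSplitting

open HyperbolicSplitting in
theorem stmt_9_general {V : Type*} [AddCommGroup V] [Module ℚ V]
    (B : V →ₗ[ℚ] V →ₗ[ℚ] ℚ)
    (hsymm : ∀ x y : V, B x y = B y x)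
    (L : Submodule ℤ V)
    (N : ℕ) (hNpos : 0 < N)
    -- level properties of `L`:
    (hlev : ∀ x : V, (∀ y ∈ L, ∃ n : ℤ, B x y = (n : ℚ)) →
      ∃ n : ℤ, (N : ℚ) * (B x x / 2) = (n : ℚ))
    (hNdual : ∀ x : V, (∀ y ∈ L, ∃ n : ℤ, B x y = (n : ℚ)) → (N : ℚ) • x ∈ L)
    -- `ℓ ∈ L` primitive isotropic with `(ℓ, L) = Nℤ`:
    (l : V) (hl : l ∈ L) (hliso : B l l = 0)
    (hlN : ∀ x ∈ L, ∃ n : ℤ, B l x = (N : ℚ) * (n : ℚ))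
    -- `ℓ' ∈ L'` with `(ℓ',ℓ) = 1`:
    (l' : V) (hl' : ∀ y ∈ L, ∃ n : ℤ, B l' y = (n : ℚ)) (hl'l : B l' l = 1)
    (lt : V) (hlt : lt = (N : ℚ) • l' - ((N : ℚ) * (B l' l' / 2)) • l) :
    lt ∈ L ∧ B lt lt = 0 ∧ B lt l = (N : ℚ) ∧
      ∀ x ∈ L, ∃! ab : ℤ × ℤ,
        x - (ab.1 • lt + ab.2 • l) ∈ L ∧
        B (x - (ab.1 • lt + ab.2 • l)) l = 0 ∧
        B (x - (ab.1 • lt + ab.2 • l)) lt = 0 := by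
  obtain ⟨k, hk⟩ := hlev l' hl'
  have hll' : B l l' = 1 := by rw [hsymm, hl'l]
  have hltL : lt ∈ L := by
    rw [hlt, hk, Int.cast_smul_eq_zsmul]
    exact L.sub_mem (hNdual l' hl') (L.smul_mem k hl)
  have hltlt : B lt lt = 0 := hlt ▸ isotropic_smul_sub_smul B hliso hl'l hll' N
  have hltl : B lt l = N := hlt ▸ smul_sub_smul_apply_right B hliso hl'l _ _
  have hdvd_l (x : V) (hx : x ∈ L) : ∃ n : ℤ, B x l = N * n := hsymm x l ▸ hlN x hx
  have hdvd_lt (x : V) (hx : x ∈ L) : ∃ n : ℤ, B x lt = N * n := by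
    obtain ⟨m, hm⟩ := hl' x hx
    obtain ⟨n, hn⟩ := hdvd_l x hx
    refine ⟨m - k * n, ?_⟩
    rw [hlt, apply_smul_sub_smul, hk, hsymm x l', hm, hn]
    push_cast
    ring
  refine ⟨hltL, hltlt, hltl, fun x hx => ?_⟩
  exact existsUnique_orthogonal_decomposition B (by exact_mod_cast hNpos.ne') hl hltL hliso
    hltlt (by rw [hsymm, hltl]) hltl hdvd_l hdvd_lt hx

/-- Let `L` be an even lattice of level `N` and `ℓ ∈ L` primitive isotropic
with `(ℓ, L) = Nℤ`.  Choosing `ℓ' ∈ L'` with `(ℓ',ℓ) = 1` and setting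
`ℓ̃ = N(ℓ' - Q(ℓ')ℓ)`, the vector `ℓ̃` lies in `L`, is isotropic, satisfies
`(ℓ̃,ℓ) = N`, and `L` splits as `K ⊕ (ℤℓ̃ + ℤℓ)` with
`K = L ∩ ℓ^⊥ ∩ ℓ̃^⊥`; the Gram matrix relations `Q(ℓ) = Q(ℓ̃) = 0`,
`(ℓ̃,ℓ) = N` show that `ℤℓ̃ + ℤℓ` is isometric to `U(N)`. -/
theorem stmt_9 {V : Type*} [AddCommGroup V] [Module ℚ V]
    (B : V →ₗ[ℚ] V →ₗ[ℚ] ℚ)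
    (hsymm : ∀ x y : V, B x y = B y x)
    (hnd : ∀ x : V, (∀ y : V, B x y = 0) → x = 0)
    (L : Submodule ℤ V) (hfg : L.FG)
    (hspan : Submodule.span ℚ (L : Set V) = ⊤)
    (hint : ∀ x ∈ L, ∀ y ∈ L, ∃ n : ℤ, B x y = (n : ℚ))
    (heven : ∀ x ∈ L, ∃ n : ℤ, B x x = 2 * (n : ℚ))
    (N : ℕ) (hNpos : 0 < N)
    -- level properties of `L`:
    (hlev : ∀ x : V, (∀ y ∈ L, ∃ n : ℤ, B x y = (n : ℚ)) →
      ∃ n : ℤ, (N : ℚ) * (B x x / 2) = (n : ℚ))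
    (hNdual : ∀ x : V, (∀ y ∈ L, ∃ n : ℤ, B x y = (n : ℚ)) → (N : ℚ) • x ∈ L)
    -- `ℓ ∈ L` primitive isotropic with `(ℓ, L) = Nℤ`:
    (l : V) (hl : l ∈ L) (hliso : B l l = 0)
    (hlprim : ∀ (a : ℤ) (x : V), x ∈ L → l = a • x → a = 1 ∨ a = -1)
    (hlN : ∀ x ∈ L, ∃ n : ℤ, B l x = (N : ℚ) * (n : ℚ))
    (hlNsurj : ∃ x ∈ L, B l x = (N : ℚ))
    -- `ℓ' ∈ L'` with `(ℓ',ℓ) = 1`: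
    (l' : V) (hl' : ∀ y ∈ L, ∃ n : ℤ, B l' y = (n : ℚ)) (hl'l : B l' l = 1)
    (lt : V) (hlt : lt = (N : ℚ) • l' - ((N : ℚ) * (B l' l' / 2)) • l) :
    lt ∈ L ∧ B lt lt = 0 ∧ B lt l = (N : ℚ) ∧
      ∀ x ∈ L, ∃! ab : ℤ × ℤ,
        x - (ab.1 • lt + ab.2 • l) ∈ L ∧
        B (x - (ab.1 • lt + ab.2 • l)) l = 0 ∧
        B (x - (ab.1 • lt + ab.2 • l)) lt = 0 :=
  stmt_9_general B hsymm L N hNpos hlev hNdual l hl hliso hlN l' hl' hl'l lt hlt
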